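/- arXiv:2405.18177 — 6 statements merged into one kernel-verified Lean document; each statement's English description precedes it below -/
import Mathlib

section
/- A connected graph G on n vertices is resistance regular (all row sums of its resistance distance matrix are equal) if and only if all diagonal entries of the Moore-Penrose inverse of its Laplacian are equal: L†_11 = L†_22 = ⋯ = L†_nn. -/
open Matrix BigOperators Finset

noncomputable def allOnes (V : Type*) : Matrix V V ℝ := Matrix.of fun _ _ => 1

/-- The resistance distance matrix of a connected graph, via the matrix
`X = (L + (1/n)J)⁻¹`: `r_ij = X_ii + X_jj - 2X_ij`. -/
noncomputable def resistMatrix {V : Type*} [Fintype V] [DecidableEq V]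
    (G : SimpleGraph V) [DecidableRel G.Adj] : Matrix V V ℝ :=
  Matrix.of fun i j =>
    (G.lapMatrix ℝ + (Fintype.card V : ℝ)⁻¹ • allOnes V)⁻¹ i i +
    (G.lapMatrix ℝ + (Fintype.card V : ℝ)⁻¹ • allOnes V)⁻¹ j j -
    2 * (G.lapMatrix ℝ + (Fintype.card V : ℝ)⁻¹ • allOnes V)⁻¹ i j

/-- `W` is the Moore-Penrose inverse of `L`. -/
def IsMoorePenrose {V : Type*} [Fintype V] [DecidableEq V] (L W : Matrix V V ℝ) : Prop :=
  L * W * L = L ∧ W * L * W = W ∧ (L * W)ᵀ = L * W ∧ (W * L)ᵀ = W * L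

/-! Since `L † = L † (L L †)ᵀ = L † L †ᵀ Lᵀ`, the pseudoinverse kills the kernel of `Lᵀ`; for a
Laplacian this kernel contains the all-ones vector, so every row of `L †` sums to zero. The row sum
of the resistance matrix at `i` is then `n L †ᵢᵢ + tr L †`, which is constant in `i` exactly when
the diagonal of `L †` is. -/

theorem Matrix.sum_diag_add_diag_sub_two_mul_eq_of_sum_row_eq_zero {V : Type*} [Fintype V]
    {W : Matrix V V ℝ} (hW : ∀ i, ∑ k, W i k = 0) (i : V) :
    ∑ k, (W i i + W k k - 2 * W i k) = Fintype.card V * W i i + W.trace := by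
  rw [Finset.sum_sub_distrib, Finset.sum_add_distrib, ← Finset.mul_sum, hW, Finset.sum_const,
    Finset.card_univ, nsmul_eq_mul, Matrix.trace]
  simp only [Matrix.diag_apply]
  ring

section

variable {V : Type*} [Fintype V] [DecidableEq V]

theorem IsMoorePenrose.eq_mul_transpose_mul_transpose {L W : Matrix V V ℝ}
    (hW : IsMoorePenrose L W) : W = W * Wᵀ * Lᵀ := by
  obtain ⟨-, hWLW, hLW, -⟩ := hW
  calc W = W * (L * W) := by rw [← Matrix.mul_assoc, hWLW]
    _ = W * (L * W)ᵀ := by rw [hLW]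
    _ = W * Wᵀ * Lᵀ := by rw [Matrix.transpose_mul, Matrix.mul_assoc]

theorem IsMoorePenrose.mulVec_eq_zero_of_transpose_mulVec_eq_zero {L W : Matrix V V ℝ}
    (hW : IsMoorePenrose L W) {v : V → ℝ} (hv : Lᵀ *ᵥ v = 0) : W *ᵥ v = 0 := by
  rw [hW.eq_mul_transpose_mul_transpose, ← Matrix.mulVec_mulVec, hv, Matrix.mulVec_zero]

theorem IsMoorePenrose.sum_row_lapMatrix_eq_zero (G : SimpleGraph V) [DecidableRel G.Adj]
    {W : Matrix V V ℝ} (hW : IsMoorePenrose (G.lapMatrix ℝ) W) (i : V) : ∑ k, W i k = 0 := by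
  have hW1 : W *ᵥ (fun _ => 1) = 0 := hW.mulVec_eq_zero_of_transpose_mulVec_eq_zero <| by
    rw [(G.isSymm_lapMatrix (R := ℝ)).eq, G.lapMatrix_mulVec_const_eq_zero]
  simpa [Matrix.mulVec, dotProduct] using congrFun hW1 i

end

theorem resistanceRegular_iff_diag_moorePenrose_const_general
    {V : Type*} [Fintype V] [DecidableEq V] (G : SimpleGraph V) [DecidableRel G.Adj]
    (W : Matrix V V ℝ) (hW : IsMoorePenrose (G.lapMatrix ℝ) W) :
    (∀ i j : V, ∑ k, (W i i + W k k - 2 * W i k) = ∑ k, (W j j + W k k - 2 * W j k)) ↔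
      (∀ i j : V, W i i = W j j) := by
  simp only [Matrix.sum_diag_add_diag_sub_two_mul_eq_of_sum_row_eq_zero
    (hW.sum_row_lapMatrix_eq_zero G), add_left_inj]
  refine forall_congr' fun i => forall_congr' fun j => ?_
  have : Nonempty V := ⟨i⟩
  exact mul_right_inj' (Nat.cast_ne_zero.mpr Fintype.card_ne_zero)

theorem resistanceRegular_iff_diag_moorePenrose_const
    {V : Type*} [Fintype V] [DecidableEq V] (G : SimpleGraph V) [DecidableRel G.Adj]
    (hG : G.Connected) (W : Matrix V V ℝ) (hW : IsMoorePenrose (G.lapMatrix ℝ) W) :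
    (∀ i j : V, ∑ k, (W i i + W k k - 2 * W i k) = ∑ k, (W j j + W k k - 2 * W j k)) ↔
      (∀ i j : V, W i i = W j j) :=
  resistanceRegular_iff_diag_moorePenrose_const_general G W hW
end

section
/- A connected graph G on n vertices is resistance regular if and only if the quantity (1/deg(v_i)) ( Σ_{v_j ∈ N(v_i)} L†_ij + 1 − 1/n ) is the same for every vertex v_i. -/
open Matrix BigOperators Finset

/-!
For a connected graph, `L† * L` is the orthogonal projection `I - J/n` onto `1ᗮ`. Reading its
diagonal entry at `vᵢ` via `L = D - A` gives `Σ_{vⱼ ∈ N(vᵢ)} L†ᵢⱼ + 1 - 1/n = deg(vᵢ) L†ᵢᵢ`, so the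
neighbourhood quantity is just `L†ᵢᵢ`. On the other side, the rows of `L†` sum to zero, so the
`i`-th row sum of `R` is `n L†ᵢᵢ + tr L†`. Both conditions therefore say that `L†` has constant
diagonal.
-/

namespace IsMoorePenrose

variable {V : Type*} [Fintype V] [DecidableEq V] {L W : Matrix V V ℝ}

theorem mulVec_eq_zero_of_mulVec_eq_zero (hW : IsMoorePenrose L W) (hL : L.IsSymm)
    {x : V → ℝ} (hx : L *ᵥ x = 0) : W *ᵥ x = 0 := by
  calc W *ᵥ x = W *ᵥ ((L * W)ᵀ *ᵥ x) := by rw [hW.2.2.1, mulVec_mulVec, ← Matrix.mul_assoc, hW.2.1]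
    _ = 0 := by rw [transpose_mul, hL.eq, ← mulVec_mulVec, hx, mulVec_zero, mulVec_zero]

theorem mul_eq_one_sub (hW : IsMoorePenrose L W)
    (hker : ∀ x : V → ℝ, L *ᵥ x = 0 ↔ ∀ i j, x i = x j) :
    W * L = 1 - (Fintype.card V : ℝ)⁻¹ • allOnes V := by
  -- The columns of `W * L - 1` lie in `ker L`, so are constant; symmetry of `W * L` and
  -- `(W * L) *ᵥ 1 = 0` then force `W * L - 1 = -(1/n) J`.
  set K := W * L
  have hcol (a c : V) : K a c - (1 : Matrix V V ℝ) a c = K c c - 1 := by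
    have hLK : L * (K - 1) = 0 := by
      rw [mul_sub, ← Matrix.mul_assoc, hW.1, Matrix.mul_one, sub_self]
    refine (hker fun r => (K - 1) r c).mp ?_ a c |>.trans (by simp)
    ext r
    simpa [mulVec, dotProduct, mul_apply] using congrFun (congrFun hLK r) c
  have hentry (a c : V) : K a c = K a a - 1 + (1 : Matrix V V ℝ) a c := by
    have hsym : K a c = K c a := congrFun (congrFun hW.2.2.2 c) a
    rw [hsym, ← hcol c a]
    simp [one_apply, eq_comm]
  have hrow (a : V) : ∑ c, K a c = 0 := by
    have hL1 : L *ᵥ (fun _ => 1) = 0 := (hker _).mpr fun _ _ => rfl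
    simpa [mulVec, dotProduct] using
      congrFun (show K *ᵥ (fun _ => 1) = 0 by rw [← mulVec_mulVec, hL1, mulVec_zero]) a
  have hdiag (a : V) : K a a = 1 - (Fintype.card V : ℝ)⁻¹ := by
    have hn : (Fintype.card V : ℝ) ≠ 0 :=
      Nat.cast_ne_zero.mpr (Fintype.card_pos_iff.mpr ⟨a⟩).ne'
    have := hrow a
    rw [sum_congr rfl fun c _ => hentry a c] at this
    simp only [sum_add_distrib, sum_const, card_univ, nsmul_eq_mul, one_apply,
      sum_ite_eq, mem_univ, if_true] at this
    field_simp
    linarith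
  ext a c
  rw [hentry a c, hdiag a]
  simp only [sub_sub_cancel_left, allOnes, smul_of, Matrix.sub_apply, of_apply, Pi.smul_apply,
    smul_eq_mul, mul_one]
  ring

end IsMoorePenrose

namespace SimpleGraph

variable {V : Type*} [Fintype V] [DecidableEq V] {G : SimpleGraph V} [DecidableRel G.Adj]

theorem Connected.lapMatrix_mulVec_eq_zero_iff (hG : G.Connected) (x : V → ℝ) :
    G.lapMatrix ℝ *ᵥ x = 0 ↔ ∀ i j, x i = x j :=
  G.lapMatrix_mulVec_eq_zero_iff_forall_reachable.trans
    ⟨fun h i j => h i j (hG.preconnected i j), fun h i j _ => h i j⟩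

theorem mul_lapMatrix_apply_self (W : Matrix V V ℝ) (i : V) :
    (W * G.lapMatrix ℝ) i i = G.degree i * W i i - ∑ k ∈ G.neighborFinset i, W i k := by
  rw [← lapMatrix_mulVec_apply, mul_apply, mulVec, dotProduct]
  refine Finset.sum_congr rfl fun k _ => ?_
  rw [mul_comm, (G.isSymm_lapMatrix ℝ).apply k i]

theorem Connected.sum_neighborFinset_add_one_sub_inv_card (hG : G.Connected)
    {W : Matrix V V ℝ} (hW : IsMoorePenrose (G.lapMatrix ℝ) W) (i : V) :
    (∑ k ∈ G.neighborFinset i, W i k) + 1 - (Fintype.card V : ℝ)⁻¹ = G.degree i * W i i := by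
  have h := congrFun (congrFun (hW.mul_eq_one_sub hG.lapMatrix_mulVec_eq_zero_iff) i) i
  simp only [mul_lapMatrix_apply_self, Matrix.sub_apply, one_apply_eq, Matrix.smul_apply,
    allOnes, of_apply, smul_eq_mul, mul_one] at h
  linarith

end SimpleGraph

theorem Matrix.sum_diag_add_diag_sub_two_mul {V : Type*} [Fintype V] {W : Matrix V V ℝ} {i : V}
    (hrow : ∑ k, W i k = 0) :
    ∑ k, (W i i + W k k - 2 * W i k) = Fintype.card V * W i i + W.trace := by
  rw [sum_sub_distrib, sum_add_distrib, ← mul_sum, hrow, sum_const, card_univ, nsmul_eq_mul,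
    trace, mul_zero, sub_zero]
  rfl

theorem resistanceRegular_iff_neighborhood_quantity_const
    {V : Type*} [Fintype V] [DecidableEq V] (G : SimpleGraph V) [DecidableRel G.Adj]
    (hG : G.Connected) (W : Matrix V V ℝ) (hW : IsMoorePenrose (G.lapMatrix ℝ) W) :
    (∀ i j : V, ∑ k, (W i i + W k k - 2 * W i k) = ∑ k, (W j j + W k k - 2 * W j k)) ↔
      (∀ i j : V,
        (G.degree i : ℝ)⁻¹ * ((∑ k ∈ G.neighborFinset i, W i k) + 1 - (Fintype.card V : ℝ)⁻¹) =
        (G.degree j : ℝ)⁻¹ * ((∑ k ∈ G.neighborFinset j, W j k) + 1 - (Fintype.card V : ℝ)⁻¹)) := by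
  rcases subsingleton_or_nontrivial V with _ | _
  · exact iff_of_true (fun i j => by rw [Subsingleton.elim i j])
      (fun i j => by rw [Subsingleton.elim i j])
  have hrow (i : V) : ∑ k, W i k = 0 := by
    simpa [mulVec, dotProduct] using congrFun (hW.mulVec_eq_zero_of_mulVec_eq_zero
      (G.isSymm_lapMatrix ℝ) G.lapMatrix_mulVec_const_eq_zero) i
  have hquot (i : V) : (G.degree i : ℝ)⁻¹ *
      ((∑ k ∈ G.neighborFinset i, W i k) + 1 - (Fintype.card V : ℝ)⁻¹) = W i i := by
    have hdeg : (G.degree i : ℝ) ≠ 0 := by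
      exact_mod_cast (hG.preconnected.degree_pos_of_nontrivial i).ne'
    rw [hG.sum_neighborFinset_add_one_sub_inv_card hW, inv_mul_cancel_left₀ hdeg]
  have hn : (Fintype.card V : ℝ) ≠ 0 := by positivity
  simp only [Matrix.sum_diag_add_diag_sub_two_mul (hrow _), hquot, add_left_inj,
    mul_right_inj' hn]
end

section
/- The Moore-Penrose inverse of the Laplacian of the cocktail party graph CP(n) with n = 2p vertices (the complete multipartite graph K_{2,…,2} with p parts) equals −(1/(4p(p−1)))(I_p ⊗ J_2) + (1/(n−2)) I_n − (1/n²) J_n, where the Laplacian is written as 2(p−1)I_n + (I_p − J_p) ⊗ J_2 under a suitable vertex ordering. -/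
open Matrix BigOperators Finset

open Kronecker

lemma allOnes_prod (p : ℕ) :
    allOnes (Fin p × Fin 2) = allOnes (Fin p) ⊗ₖ allOnes (Fin 2) := by
  ext ⟨i,s⟩ ⟨j,t⟩
  simp [allOnes, Matrix.kroneckerMap_apply]

lemma allOnes_mul_allOnes (m : ℕ) :
    allOnes (Fin m) * allOnes (Fin m) = (m : ℝ) • allOnes (Fin m) := by
  ext i j
  simp [allOnes, Matrix.mul_apply]

lemma allOnes_transpose (V : Type*) : (allOnes V)ᵀ = allOnes V := by
  ext i j; simp [allOnes]

lemma sub_kronecker' {l m n p : Type*} (A B : Matrix l m ℝ) (C : Matrix n p ℝ) :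
    (A - B) ⊗ₖ C = A ⊗ₖ C - B ⊗ₖ C := by
  ext ⟨i,s⟩ ⟨j,t⟩
  simp [Matrix.kroneckerMap_apply, sub_mul]

theorem moorePenrose_cocktailParty_lap (p : ℕ) (hp : 2 ≤ p) :
    IsMoorePenrose
      ((2 * ((p : ℝ) - 1)) • (1 : Matrix (Fin p × Fin 2) (Fin p × Fin 2) ℝ) +
        ((1 : Matrix (Fin p) (Fin p) ℝ) - allOnes (Fin p)) ⊗ₖ allOnes (Fin 2))
      (-(1 / (4 * (p : ℝ) * ((p : ℝ) - 1))) •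
          ((1 : Matrix (Fin p) (Fin p) ℝ) ⊗ₖ allOnes (Fin 2)) +
        (1 / ((2 * p : ℝ) - 2)) • (1 : Matrix (Fin p × Fin 2) (Fin p × Fin 2) ℝ) -
        (1 / (2 * p : ℝ) ^ 2) • allOnes (Fin p × Fin 2)) := by
  have hp0 : (p : ℝ) ≠ 0 := by positivity
  have hple : (2 : ℝ) ≤ (p : ℝ) := by exact_mod_cast hp
  have hp1 : (p : ℝ) - 1 ≠ 0 := by nlinarith
  have hd1 : (-(2:ℝ) + (p:ℝ) * 2) ≠ 0 := by nlinarith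
  have hd2 : (-((p:ℝ) * 4) + (p:ℝ) ^ 2 * 4) ≠ 0 := by nlinarith
  set K : Matrix (Fin p × Fin 2) (Fin p × Fin 2) ℝ :=
    (1 : Matrix (Fin p) (Fin p) ℝ) ⊗ₖ allOnes (Fin 2) with hK
  set J : Matrix (Fin p × Fin 2) (Fin p × Fin 2) ℝ := allOnes (Fin p × Fin 2) with hJ
  have hKK : K * K = (2 : ℝ) • K := by
    rw [hK, ← Matrix.mul_kronecker_mul, one_mul, allOnes_mul_allOnes, Matrix.kronecker_smul]
    norm_num
  have hJJ : J * J = (2 * (p : ℝ)) • J := by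
    rw [hJ, allOnes_prod, ← Matrix.mul_kronecker_mul, allOnes_mul_allOnes, allOnes_mul_allOnes,
      Matrix.kronecker_smul, Matrix.smul_kronecker, smul_smul]
    norm_num [mul_comm]
  have hKJ : K * J = (2 : ℝ) • J := by
    rw [hK, hJ, allOnes_prod, ← Matrix.mul_kronecker_mul, one_mul, allOnes_mul_allOnes,
      Matrix.kronecker_smul]
    norm_num
  have hJK : J * K = (2 : ℝ) • J := by
    rw [hK, hJ, allOnes_prod, ← Matrix.mul_kronecker_mul, mul_one, allOnes_mul_allOnes,
      Matrix.kronecker_smul]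
    norm_num
  set L : Matrix (Fin p × Fin 2) (Fin p × Fin 2) ℝ :=
    (2 * ((p : ℝ) - 1)) • (1 : Matrix (Fin p × Fin 2) (Fin p × Fin 2) ℝ) +
      ((1 : Matrix (Fin p) (Fin p) ℝ) - allOnes (Fin p)) ⊗ₖ allOnes (Fin 2) with hL
  set W : Matrix (Fin p × Fin 2) (Fin p × Fin 2) ℝ :=
    -(1 / (4 * (p : ℝ) * ((p : ℝ) - 1))) •
        ((1 : Matrix (Fin p) (Fin p) ℝ) ⊗ₖ allOnes (Fin 2)) +
      (1 / ((2 * p : ℝ) - 2)) • (1 : Matrix (Fin p × Fin 2) (Fin p × Fin 2) ℝ) -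
      (1 / (2 * p : ℝ) ^ 2) • allOnes (Fin p × Fin 2) with hW
  have hLalt : L = (2 * ((p : ℝ) - 1)) • (1 : Matrix (Fin p × Fin 2) (Fin p × Fin 2) ℝ)
      + K - J := by
    rw [hL, sub_kronecker', ← hK, ← allOnes_prod, ← hJ]
    abel
  have hWalt : W = -(1 / (4 * (p : ℝ) * ((p : ℝ) - 1))) • K
      + (1 / ((2 * p : ℝ) - 2)) • (1 : Matrix (Fin p × Fin 2) (Fin p × Fin 2) ℝ)
      - (1 / (2 * p : ℝ) ^ 2) • J := by
    rw [hW]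
  have hLW : L * W = (1 : Matrix (Fin p × Fin 2) (Fin p × Fin 2) ℝ)
      - (1 / (2 * (p : ℝ))) • J := by
    rw [hLalt, hWalt]
    simp only [add_mul, mul_add, sub_mul, mul_sub, smul_mul_assoc, mul_smul_comm, smul_smul,
      hKK, hJJ, hKJ, hJK, mul_one, one_mul]
    match_scalars <;> (field_simp ; try ring) <;> (field_simp [hd1, hd2] ; ring)
  have hWL : W * L = (1 : Matrix (Fin p × Fin 2) (Fin p × Fin 2) ℝ)
      - (1 / (2 * (p : ℝ))) • J := by
    rw [hLalt, hWalt]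
    simp only [add_mul, mul_add, sub_mul, mul_sub, smul_mul_assoc, mul_smul_comm, smul_smul,
      hKK, hJJ, hKJ, hJK, mul_one, one_mul]
    match_scalars <;> (field_simp ; try ring) <;> (field_simp [hd1, hd2] ; ring)
  have hJL : J * L = 0 := by
    rw [hLalt]
    simp only [mul_add, mul_sub, mul_smul_comm, smul_smul, hJJ, hJK, mul_one]
    match_scalars <;> (field_simp ; try ring) <;> (field_simp [hd1, hd2] ; ring)
  have hJW : J * W = 0 := by
    rw [hWalt]
    simp only [mul_add, mul_sub, mul_smul_comm, smul_smul, hJJ, hJK, mul_one, mul_neg,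
      neg_smul]
    match_scalars <;> (field_simp ; try ring) <;> (field_simp [hd1, hd2] ; ring)
  have hJT : Jᵀ = J := by rw [hJ, allOnes_transpose]
  refine ⟨?_, ?_, ?_, ?_⟩
  · rw [hLW, sub_mul, one_mul, smul_mul_assoc, hJL, smul_zero, sub_zero]
  · rw [hWL, sub_mul, one_mul, smul_mul_assoc, hJW, smul_zero, sub_zero]
  · rw [hLW, transpose_sub, transpose_one, transpose_smul, hJT]
  · rw [hWL, transpose_sub, transpose_one, transpose_smul, hJT]
end

section
/- For a connected graph G on n ≥ 2 vertices, the resistance spectral radius satisfies ρ_1(G) ≥ sqrt( (T_1² + ⋯ + T_n²) / (R_1² + ⋯ + R_n²) ), with equality if and only if G is pseudo resistance regular. -/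
open Matrix BigOperators Finset

/-- Resistance degree `R_i`. -/
noncomputable def rdeg {V : Type*} [Fintype V] [DecidableEq V]
    (G : SimpleGraph V) [DecidableRel G.Adj] (i : V) : ℝ :=
  ∑ j, resistMatrix G i j

/-- Second resistance degree `T_i`. -/
noncomputable def rdeg2 {V : Type*} [Fintype V] [DecidableEq V]
    (G : SimpleGraph V) [DecidableRel G.Adj] (i : V) : ℝ :=
  ∑ j, resistMatrix G i j * rdeg G j

/-!
Write `R` for the resistance matrix and `x = (R_i)` for the vector of resistance degrees, so that
`T = R x`. As `R` is symmetric and entrywise nonnegative, every eigenvalue `λ` satisfies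
`|λ| ≤ ρ₁` (compare the quadratic forms of an eigenvector `v` and of `|v|`), so `ρ₁² - R²` is
positive semidefinite and `‖T‖² = ‖R x‖² ≤ ρ₁² ‖x‖²`.

Equality forces `R² x = ρ₁² x`, so `w = ρ₁ x - R x` satisfies `R w = -ρ₁ w`. Then `|w|` is a
Perron vector, hence strictly positive, and comparing the two quadratic forms termwise shows that
the entries of `w` have pairwise opposite signs; with `n ≥ 3` this forces `w = 0`, i.e. `T = ρ₁ x`.
For `n = 2` both resistance degrees equal `r₁₂`, so `T = r₁₂ x`. Conversely, if `T = c x` with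
`x > 0`, pairing with a nonnegative eigenvector for `ρ₁` gives `c = ρ₁`, and then the bound is
attained.
-/

open Unitary

namespace Matrix

section PosSemidef

variable {ι : Type*} [Fintype ι] [DecidableEq ι] {B : Matrix ι ι ℝ} {c : ℝ}

lemma dotProduct_mulVec_le_of_posSemidef (h : (c • 1 - B).PosSemidef) (v : ι → ℝ) :
    v ⬝ᵥ B *ᵥ v ≤ c * (v ⬝ᵥ v) := by
  have := h.dotProduct_mulVec_nonneg v
  simp only [star_trivial, sub_mulVec, smul_mulVec, one_mulVec, dotProduct_sub,
    dotProduct_smul, smul_eq_mul] at this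
  linarith

lemma mulVec_eq_smul_of_posSemidef (h : (c • 1 - B).PosSemidef) {v : ι → ℝ}
    (hv : v ⬝ᵥ B *ᵥ v = c * (v ⬝ᵥ v)) : B *ᵥ v = c • v := by
  have := (h.dotProduct_mulVec_zero_iff v).1 (by
    simp only [star_trivial, sub_mulVec, smul_mulVec, one_mulVec, dotProduct_sub,
      dotProduct_smul, smul_eq_mul, hv, sub_self])
  rw [sub_mulVec, smul_mulVec, one_mulVec, sub_eq_zero] at this
  exact this.symm

lemma PosDef.add_sub_two_mul_pos {X : Matrix ι ι ℝ} (hX : X.PosDef) {i j : ι} (hij : i ≠ j) :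
    0 < X i i + X j j - 2 * X i j := by
  have h := hX.dotProduct_mulVec_pos (x := Pi.single i 1 - Pi.single j 1)
    (sub_ne_zero.2 fun h => by simpa [hij] using congrFun h i)
  have hji : X j i = X i j := by simpa using hX.isHermitian.apply i j
  simp only [star_trivial, mulVec_sub, mulVec_single_one, dotProduct_sub, sub_dotProduct,
    single_dotProduct, col_apply, one_mul] at h
  linarith

end PosSemidef

section NonnegEntries

variable {ι : Type*} {A : Matrix ι ι ℝ}

lemma abs_mul_mul_eq (hA : ∀ i j, 0 ≤ A i j) (v : ι → ℝ) (j k : ι) :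
    |v j * A j k * v k| = |v| j * A j k * |v| k := by
  rw [abs_mul, abs_mul, abs_of_nonneg (hA j k), Pi.abs_apply, Pi.abs_apply]

variable [Fintype ι]

lemma dotProduct_abs_abs (v : ι → ℝ) : |v| ⬝ᵥ |v| = v ⬝ᵥ v := by
  simp [dotProduct, abs_mul_abs_self]

lemma dotProduct_mulVec_eq_sum (v : ι → ℝ) : v ⬝ᵥ A *ᵥ v = ∑ j, ∑ k, v j * A j k * v k := by
  simp only [dotProduct, mulVec, Finset.mul_sum, mul_assoc]

lemma abs_dotProduct_mulVec_le (hA : ∀ i j, 0 ≤ A i j) (v : ι → ℝ) :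
    |v ⬝ᵥ A *ᵥ v| ≤ |v| ⬝ᵥ A *ᵥ |v| := by
  rw [dotProduct_mulVec_eq_sum, dotProduct_mulVec_eq_sum]
  refine (Finset.abs_sum_le_sum_abs _ _).trans (Finset.sum_le_sum fun j _ => ?_)
  refine (Finset.abs_sum_le_sum_abs _ _).trans (Finset.sum_le_sum fun k _ => ?_)
  rw [abs_mul_mul_eq hA]

lemma abs_mul_dotProduct_self_le_of_mulVec_eq_smul (hA : ∀ i j, 0 ≤ A i j) {v : ι → ℝ} {μ : ℝ}
    (hv : A *ᵥ v = μ • v) : |μ| * (v ⬝ᵥ v) ≤ |v| ⬝ᵥ A *ᵥ |v| :=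
  calc |μ| * (v ⬝ᵥ v) = |v ⬝ᵥ A *ᵥ v| := by
        rw [hv, dotProduct_smul, smul_eq_mul, abs_mul,
          abs_of_nonneg (show 0 ≤ v ⬝ᵥ v from dotProduct_star_self_nonneg v)]
    _ ≤ |v| ⬝ᵥ A *ᵥ |v| := abs_dotProduct_mulVec_le hA v

lemma mul_mul_nonpos_of_dotProduct_mulVec_abs_eq (hA : ∀ i j, 0 ≤ A i j) {v : ι → ℝ}
    (hv : |v| ⬝ᵥ A *ᵥ |v| = -(v ⬝ᵥ A *ᵥ v)) (j k : ι) : v j * A j k * v k ≤ 0 := by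
  have hterm : ∀ j k, 0 ≤ |v| j * A j k * |v| k + v j * A j k * v k := fun j k => by
    rw [← abs_mul_mul_eq hA]
    linarith [neg_abs_le (v j * A j k * v k)]
  have hsum : ∑ j, ∑ k, (|v| j * A j k * |v| k + v j * A j k * v k) = 0 := by
    simp only [Finset.sum_add_distrib, ← dotProduct_mulVec_eq_sum, hv, neg_add_cancel]
  have hrow := (Finset.sum_eq_zero_iff_of_nonneg fun j _ =>
    Finset.sum_nonneg fun k _ => hterm j k).1 hsum j (Finset.mem_univ _)
  have := (Finset.sum_eq_zero_iff_of_nonneg fun k _ => hterm j k).1 hrow k (Finset.mem_univ _)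
  linarith [abs_nonneg (v j * A j k * v k), abs_mul_mul_eq hA v j k]

lemma pos_of_mulVec_eq_smul (hA : ∀ i j, 0 ≤ A i j) (hpos : Pairwise fun i j => 0 < A i j)
    {u : ι → ℝ} (hu : 0 ≤ u) (hu0 : u ≠ 0) {ρ : ℝ} (hAu : A *ᵥ u = ρ • u) (k : ι) : 0 < u k := by
  refine (hu k).lt_of_ne fun hk => hu0 (funext fun j => ?_)
  obtain rfl | hjk := eq_or_ne j k
  · exact hk.symm
  have hrow : ∑ i, A k i * u i = 0 := by
    simpa [mulVec, dotProduct, ← hk] using congrFun hAu k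
  have := (Finset.sum_eq_zero_iff_of_nonneg fun i _ => mul_nonneg (hA k i) (hu i)).1 hrow j
    (Finset.mem_univ _)
  exact (mul_eq_zero.1 this).resolve_left (hpos hjk.symm).ne'

end NonnegEntries

namespace IsHermitian

variable {ι : Type*} [Fintype ι] {A : Matrix ι ι ℝ}

lemma mulVec_dotProduct (hA : A.IsHermitian) (u v : ι → ℝ) : A *ᵥ u ⬝ᵥ v = u ⬝ᵥ A *ᵥ v := by
  rw [dotProduct_mulVec, ← mulVec_transpose, show Aᵀ = A from hA, dotProduct_comm]

variable [DecidableEq ι]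

lemma posSemidef_conj_diagonal (hA : A.IsHermitian) {d : ι → ℝ} (hd : ∀ i, 0 ≤ d i) :
    (conjStarAlgAut ℝ _ hA.eigenvectorUnitary (diagonal d)).PosSemidef := by
  rw [conjStarAlgAut_apply, star_eq_conjTranspose]
  exact (posSemidef_diagonal_iff.2 hd).mul_mul_conjTranspose_same _

lemma posSemidef_smul_one_sub (hA : A.IsHermitian) {ρ : ℝ} (hρ : ∀ i, hA.eigenvalues i ≤ ρ) :
    (ρ • 1 - A).PosSemidef := by
  convert hA.posSemidef_conj_diagonal fun i => sub_nonneg.2 (hρ i)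
  conv_lhs => rw [hA.spectral_theorem]
  rw [← diagonal_sub, map_sub, ← smul_one_eq_diagonal]
  simp

lemma posSemidef_sq_smul_one_sub_mul_self (hA : A.IsHermitian) {ρ : ℝ}
    (hρ : ∀ i, |hA.eigenvalues i| ≤ ρ) : (ρ ^ 2 • 1 - A * A).PosSemidef := by
  convert hA.posSemidef_conj_diagonal fun i =>
    sub_nonneg.2 (sq_le_sq' (abs_le.1 (hρ i)).1 (abs_le.1 (hρ i)).2)
  conv_lhs => rw [hA.spectral_theorem]
  rw [← map_mul, diagonal_mul_diagonal, ← diagonal_sub, map_sub, ← smul_one_eq_diagonal]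
  simp [sq]

variable {ρ : ℝ}

lemma abs_le_of_mulVec_eq_smul (hA : A.IsHermitian) (hnn : ∀ i j, 0 ≤ A i j)
    (hρ : ∀ i, hA.eigenvalues i ≤ ρ) {v : ι → ℝ} (hv0 : v ≠ 0) {μ : ℝ} (hv : A *ᵥ v = μ • v) :
    |μ| ≤ ρ := by
  have h₁ := abs_mul_dotProduct_self_le_of_mulVec_eq_smul hnn hv
  have h₂ := dotProduct_mulVec_le_of_posSemidef (hA.posSemidef_smul_one_sub hρ) |v|
  rw [dotProduct_abs_abs] at h₂
  exact le_of_mul_le_mul_right (h₁.trans h₂) (dotProduct_star_self_pos_iff.2 hv0)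

lemma abs_eigenvalues_le (hA : A.IsHermitian) (hnn : ∀ i j, 0 ≤ A i j)
    (hρ : ∀ i, hA.eigenvalues i ≤ ρ) (i : ι) : |hA.eigenvalues i| ≤ ρ :=
  hA.abs_le_of_mulVec_eq_smul hnn hρ
    (hA.eigenvectorBasis.orthonormal.ne_zero i ∘ (WithLp.ofLp_eq_zero 2).1)
    (hA.mulVec_eigenvectorBasis i)

lemma mulVec_abs_eq_smul_abs (hA : A.IsHermitian) (hnn : ∀ i j, 0 ≤ A i j)
    (hρ : ∀ i, hA.eigenvalues i ≤ ρ) {v : ι → ℝ} {μ : ℝ} (hv : A *ᵥ v = μ • v) (hμ : |μ| = ρ) :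
    A *ᵥ |v| = ρ • |v| := by
  have h₁ := abs_mul_dotProduct_self_le_of_mulVec_eq_smul hnn hv
  have h₂ := dotProduct_mulVec_le_of_posSemidef (hA.posSemidef_smul_one_sub hρ) |v|
  rw [dotProduct_abs_abs] at h₂
  exact mulVec_eq_smul_of_posSemidef (hA.posSemidef_smul_one_sub hρ)
    (by rw [dotProduct_abs_abs]; exact le_antisymm h₂ (hμ ▸ h₁))

/-- An eigenvector for `-ρ` would have entries of pairwise opposite signs. -/
lemma card_le_two_of_mulVec_eq_neg_smul (hA : A.IsHermitian) (hnn : ∀ i j, 0 ≤ A i j)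
    (hpos : Pairwise fun i j => 0 < A i j) (hρ : ∀ i, hA.eigenvalues i ≤ ρ) {w : ι → ℝ}
    (hw0 : w ≠ 0) (hw : A *ᵥ w = (-ρ) • w) : Fintype.card ι ≤ 2 := by
  have hρ0 : 0 ≤ ρ := (abs_nonneg _).trans (hA.abs_le_of_mulVec_eq_smul hnn hρ hw0 hw)
  have hAw := hA.mulVec_abs_eq_smul_abs hnn hρ hw (by rw [abs_neg, abs_of_nonneg hρ0])
  have hw_ne : ∀ k, w k ≠ 0 := fun k => abs_pos.1 <| by
    simpa using pos_of_mulVec_eq_smul hnn hpos (abs_nonneg w) (by simpa using hw0) hAw k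
  have hquad : |w| ⬝ᵥ A *ᵥ |w| = -(w ⬝ᵥ A *ᵥ w) := by
    rw [hAw, hw, dotProduct_smul, dotProduct_smul, smul_eq_mul, smul_eq_mul, dotProduct_abs_abs]
    ring
  have hsign : ∀ j k, j ≠ k → w j * w k < 0 := fun j k hjk => by
    have := mul_mul_nonpos_of_dotProduct_mulVec_abs_eq hnn hquad j k
    have : w j * w k ≤ 0 := by nlinarith [hpos hjk]
    exact this.lt_of_ne (mul_ne_zero (hw_ne j) (hw_ne k))
  by_contra! hcard
  obtain ⟨a, b, c, hab, hac, hbc⟩ := Fintype.two_lt_card_iff.1 hcard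
  have h₁ := mul_pos_of_neg_of_neg (hsign a b hab) (hsign a c hac)
  have h₂ := mul_neg_of_pos_of_neg (mul_self_pos.2 (hw_ne a)) (hsign b c hbc)
  linarith [show w a * w b * (w a * w c) = w a * w a * (w b * w c) by ring]

lemma mulVec_dotProduct_mulVec_le (hA : A.IsHermitian) (hnn : ∀ i j, 0 ≤ A i j)
    (hρ : ∀ i, hA.eigenvalues i ≤ ρ) (x : ι → ℝ) : A *ᵥ x ⬝ᵥ A *ᵥ x ≤ ρ ^ 2 * (x ⬝ᵥ x) := by
  rw [hA.mulVec_dotProduct, mulVec_mulVec]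
  exact dotProduct_mulVec_le_of_posSemidef
    (hA.posSemidef_sq_smul_one_sub_mul_self (hA.abs_eigenvalues_le hnn hρ)) x

lemma mulVec_eq_smul_of_mulVec_dotProduct_mulVec_eq (hA : A.IsHermitian)
    (hnn : ∀ i j, 0 ≤ A i j) (hpos : Pairwise fun i j => 0 < A i j)
    (hρ : ∀ i, hA.eigenvalues i ≤ ρ) (hcard : 2 < Fintype.card ι) {x : ι → ℝ}
    (h : A *ᵥ x ⬝ᵥ A *ᵥ x = ρ ^ 2 * (x ⬝ᵥ x)) : A *ᵥ x = ρ • x := by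
  have hsq : A *ᵥ A *ᵥ x = ρ ^ 2 • x := by
    rw [mulVec_mulVec]
    refine mulVec_eq_smul_of_posSemidef
      (hA.posSemidef_sq_smul_one_sub_mul_self (hA.abs_eigenvalues_le hnn hρ)) ?_
    rw [← mulVec_mulVec, ← hA.mulVec_dotProduct, h]
  by_contra hne
  refine hcard.not_ge (hA.card_le_two_of_mulVec_eq_neg_smul hnn hpos hρ
    (sub_ne_zero.2 (Ne.symm hne)) (w := ρ • x - A *ᵥ x) ?_)
  rw [mulVec_sub, mulVec_smul, hsq]
  module

lemma eq_of_mulVec_eq_smul_of_pos (hA : A.IsHermitian) (hnn : ∀ i j, 0 ≤ A i j)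
    (hρ : ∀ i, hA.eigenvalues i ≤ ρ) (hρ' : ρ ∈ Set.range hA.eigenvalues) {x : ι → ℝ}
    (hx : ∀ i, 0 < x i) {c : ℝ} (hc : A *ᵥ x = c • x) : c = ρ := by
  obtain ⟨i, rfl⟩ := hρ'
  set e : ι → ℝ := (hA.eigenvectorBasis i).ofLp
  have he0 : e ≠ 0 := hA.eigenvectorBasis.orthonormal.ne_zero i ∘ (WithLp.ofLp_eq_zero 2).1
  have hAe := hA.mulVec_abs_eq_smul_abs hnn hρ (hA.mulVec_eigenvectorBasis i) <|
    abs_eq_self.2 <| (abs_nonneg _).trans (hA.abs_eigenvalues_le hnn hρ i)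
  have hex : 0 < |e| ⬝ᵥ x := by
    obtain ⟨k, hk⟩ := Function.ne_iff.1 he0
    exact Finset.sum_pos' (fun j _ => mul_nonneg (abs_nonneg (e j)) (hx j).le)
      ⟨k, Finset.mem_univ _, mul_pos (abs_pos.2 hk) (hx k)⟩
  refine mul_right_cancel₀ hex.ne' ?_
  rw [← smul_eq_mul, ← dotProduct_smul, ← hc, ← hA.mulVec_dotProduct, hAe, smul_dotProduct,
    smul_eq_mul]

end IsHermitian

end Matrix

lemma forall_div_eq_div_iff_exists_eq_smul {ι : Type*} [Nonempty ι] {x y : ι → ℝ}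
    (hx : ∀ i, x i ≠ 0) : (∀ i j, y i / x i = y j / x j) ↔ ∃ c : ℝ, y = c • x := by
  refine ⟨fun h => ?_, fun ⟨c, hc⟩ i j => by simp [hc, mul_div_cancel_right₀ _ (hx _)]⟩
  obtain ⟨i₀⟩ := ‹Nonempty ι›
  exact ⟨y i₀ / x i₀, funext fun i => by
    rw [Pi.smul_apply, smul_eq_mul, ← h i, div_mul_cancel₀ _ (hx i)]⟩

namespace SimpleGraph

variable {V : Type*} [Fintype V] [DecidableEq V] (G : SimpleGraph V) [DecidableRel G.Adj]

lemma posDef_lapMatrix_add_smul_allOnes (hG : G.Connected) :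
    (G.lapMatrix ℝ + (Fintype.card V : ℝ)⁻¹ • allOnes V).PosDef := by
  have hcard : 0 < (Fintype.card V : ℝ) := by
    have := hG.nonempty
    exact_mod_cast Fintype.card_pos
  have hJ : ∀ x : V → ℝ, x ⬝ᵥ allOnes V *ᵥ x = (∑ i, x i) ^ 2 := fun x => by
    simp [allOnes, mulVec, dotProduct, ← Finset.sum_mul, sq]
  refine posDef_iff_dotProduct_mulVec.2 ⟨(isHermitian_lapMatrix ℝ G).add ?_, fun x hx => ?_⟩
  · ext i j
    simp [allOnes]
  have hL := (posSemidef_lapMatrix ℝ G).dotProduct_mulVec_nonneg x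
  rw [star_trivial] at hL ⊢
  rw [add_mulVec, dotProduct_add, smul_mulVec, dotProduct_smul, hJ, smul_eq_mul]
  refine (add_nonneg hL (by positivity)).lt_of_ne' fun h0 => hx ?_
  obtain ⟨hLx, hsum⟩ := (add_eq_zero_iff_of_nonneg hL (by positivity)).1 h0
  have hconst : ∀ i j, x i = x j := fun i j =>
    (G.lapMatrix_toLinearMap₂'_apply'_eq_zero_iff_forall_reachable x).1
      (by rwa [toLinearMap₂'_apply']) i j (hG.preconnected i j)
  funext i
  have : (Fintype.card V : ℝ) * x i = 0 := by
    simpa [hcard.ne', Finset.sum_congr rfl fun j _ => hconst j i] using hsum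
  simpa [hcard.ne'] using this

lemma resistMatrix_self (i : V) : resistMatrix G i i = 0 := by
  rw [resistMatrix, of_apply]
  ring

lemma resistMatrix_pos (hG : G.Connected) {i j : V} (hij : i ≠ j) : 0 < resistMatrix G i j :=
  (G.posDef_lapMatrix_add_smul_allOnes hG).inv.add_sub_two_mul_pos hij

lemma resistMatrix_nonneg (hG : G.Connected) (i j : V) : 0 ≤ resistMatrix G i j := by
  obtain rfl | hij := eq_or_ne i j
  · exact (G.resistMatrix_self i).ge
  · exact (G.resistMatrix_pos hG hij).le

lemma rdeg_pos [Nontrivial V] (hG : G.Connected) (i : V) : 0 < rdeg G i := by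
  obtain ⟨j, hj⟩ := exists_ne i
  exact Finset.sum_pos' (fun k _ => G.resistMatrix_nonneg hG i k)
    ⟨j, Finset.mem_univ _, G.resistMatrix_pos hG hj.symm⟩

lemma rdeg2_eq_mulVec : rdeg2 G = resistMatrix G *ᵥ rdeg G := rfl

end SimpleGraph

lemma SimpleGraph.rdeg2_fin_two (G : SimpleGraph (Fin 2)) [DecidableRel G.Adj]
    (hR : (resistMatrix G).IsHermitian) : rdeg2 G = resistMatrix G 0 1 • rdeg G := by
  have h10 : resistMatrix G 1 0 = resistMatrix G 0 1 := by simpa using hR.apply 0 1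
  funext i
  fin_cases i <;> simp [rdeg2, rdeg, Fin.sum_univ_two, resistMatrix_self, h10]

theorem resistance_spectral_radius_lower_bound
    (n : ℕ) (hn : 2 ≤ n) (G : SimpleGraph (Fin n)) [DecidableRel G.Adj]
    (hG : G.Connected) (hR : (resistMatrix G).IsHermitian)
    (ρ : ℝ) (hρ : IsGreatest (Set.range hR.eigenvalues) ρ) :
    Real.sqrt ((∑ i, rdeg2 G i ^ 2) / (∑ i, rdeg G i ^ 2)) ≤ ρ ∧
    (ρ = Real.sqrt ((∑ i, rdeg2 G i ^ 2) / (∑ i, rdeg G i ^ 2)) ↔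
      ∀ i j : Fin n, rdeg2 G i / rdeg G i = rdeg2 G j / rdeg G j) := by
  have : Nontrivial (Fin n) := Fin.nontrivial_iff_two_le.2 hn
  have hnn := G.resistMatrix_nonneg hG
  have hmax : ∀ i, hR.eigenvalues i ≤ ρ := fun i => hρ.2 ⟨i, rfl⟩
  have hρ0 : 0 ≤ ρ := by
    obtain ⟨i, rfl⟩ := hρ.1
    exact (abs_nonneg _).trans (hR.abs_eigenvalues_le hnn hmax i)
  have hx := G.rdeg_pos hG
  have hsq : ∀ v : Fin n → ℝ, ∑ i, v i ^ 2 = v ⬝ᵥ v := fun v => by simp [dotProduct, sq]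
  have hxx : 0 < rdeg G ⬝ᵥ rdeg G :=
    hsq (rdeg G) ▸ Finset.sum_pos (fun i _ => pow_pos (hx i) 2) univ_nonempty
  have hregular : (∃ c : ℝ, rdeg2 G = c • rdeg G) ↔ rdeg2 G = ρ • rdeg G :=
    ⟨fun ⟨c, hc⟩ => hR.eq_of_mulVec_eq_smul_of_pos hnn hmax hρ.1 hx hc ▸ hc, fun h => ⟨ρ, h⟩⟩
  have hequality : rdeg2 G ⬝ᵥ rdeg2 G = ρ ^ 2 * (rdeg G ⬝ᵥ rdeg G) ↔ rdeg2 G = ρ • rdeg G := by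
    refine ⟨fun h => ?_, fun h => by simp [h, sq, mul_assoc]⟩
    rcases hn.lt_or_eq with hn3 | rfl
    · exact hR.mulVec_eq_smul_of_mulVec_dotProduct_mulVec_eq hnn
        (fun i j hij => G.resistMatrix_pos hG hij) hmax (by simpa using hn3) h
    · exact hregular.1 ⟨_, G.rdeg2_fin_two hR⟩
  rw [hsq, hsq]
  refine ⟨Real.sqrt_le_iff.2 ⟨hρ0, ?_⟩, ?_⟩
  · rw [div_le_iff₀ hxx]
    exact hR.mulVec_dotProduct_mulVec_le hnn hmax (rdeg G)
  · have hTT : 0 ≤ rdeg2 G ⬝ᵥ rdeg2 G := dotProduct_star_self_nonneg _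
    rw [eq_comm, Real.sqrt_eq_iff_mul_self_eq (div_nonneg hTT hxx.le) hρ0, div_eq_iff hxx.ne', ← sq,
      hequality, ← hregular, forall_div_eq_div_iff_exists_eq_smul fun i => (hx i).ne']
end

section
/- For a connected graph G on n ≥ 2 vertices, the resistance spectral radius satisfies ρ_1(G) ≤ max_{i≠j} sqrt( R̄_i R̄_j ), where R̄_i = T_i / R_i is the average resistance degree; equality holds if and only if G is pseudo resistance regular. -/
/-!
Let `u` be an eigenvector of `R` for `ρ` and `w = |u|`, so that `ρ w ≤ R w` entrywise. Write
`w = d * y` with `d = R 𝟙` the vector of resistance degrees and let `y p ≥ y q` be the two largest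
coordinates of `y`. As `R` has zero diagonal, row `p` only sees coordinates bounded by `y q`, so
`ρ d_p y_p ≤ T_p y_q`, and likewise `ρ d_q y_q ≤ T_q y_p`; multiplying gives `ρ² ≤ R̄_p R̄_q`.
If `ρ` attains the bound, all these inequalities are tight; since off-diagonal resistances are
positive this forces `y` to be constant when `n ≥ 3`, whence `R̄_i ≥ ρ` for all `i` and then
`R̄_i = ρ`. For `n = 2` the `R̄_i` agree trivially. Conversely, if `R̄ ≡ c` then `R d = c d`, so
`c ≤ ρ`. Positivity of `r_ij = (e_i - e_j)ᵀ (L + J/n)⁻¹ (e_i - e_j)` comes from `L + J/n` being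
positive definite for a connected graph.
-/

open Matrix BigOperators Finset

theorem Fintype.exists_two_largest {ι α : Type*} [Fintype ι] [LinearOrder α] (y : ι → α)
    (hcard : 1 < Fintype.card ι) : ∃ p q, p ≠ q ∧ (∀ j, y j ≤ y p) ∧ ∀ j ≠ p, y j ≤ y q := by
  classical
  have : Nonempty ι := Fintype.card_pos_iff.mp (by omega)
  obtain ⟨p, -, hp⟩ := Finset.exists_max_image univ y univ_nonempty
  have hne : (univ.erase p).Nonempty := Finset.card_pos.mp <| by
    rw [card_erase_of_mem (mem_univ p), card_univ]; omega
  obtain ⟨q, hq, hqmax⟩ := Finset.exists_max_image _ y hne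
  exact ⟨p, q, (ne_of_mem_erase hq).symm, fun j => hp j (mem_univ j),
    fun j hj => hqmax j (mem_erase.mpr ⟨hj, mem_univ j⟩)⟩

theorem sq_le_div_mul_div {ρ a b s t u v : ℝ} (hρ : 0 ≤ ρ) (ha : 0 < a) (hb : 0 < b)
    (hu : 0 < u) (hv : 0 < v) (h₁ : ρ * (a * u) ≤ s * v) (h₂ : ρ * (b * v) ≤ t * u) :
    ρ ^ 2 ≤ s / a * (t / b) := by
  rw [div_mul_div_comm, le_div_iff₀ (mul_pos ha hb)]
  have h := mul_le_mul h₁ h₂ (by positivity) (by nlinarith [mul_pos ha hu])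
  nlinarith [mul_pos hu hv]

theorem le_of_div_mul_div_le_sq {ρ a b s t u v : ℝ} (hρ : 0 < ρ) (ha : 0 < a) (hb : 0 < b)
    (hu : 0 < u) (hv : 0 < v) (h₁ : ρ * (a * u) ≤ s * v) (h₂ : ρ * (b * v) ≤ t * u)
    (h : s / a * (t / b) ≤ ρ ^ 2) : s * v ≤ ρ * (a * u) ∧ t * u ≤ ρ * (b * v) := by
  rw [div_mul_div_comm, div_le_iff₀ (mul_pos ha hb)] at h
  have hau : 0 < ρ * (a * u) := by positivity
  have hbv : 0 < ρ * (b * v) := by positivity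
  have huv := mul_le_mul_of_nonneg_right h (mul_pos hu hv).le
  constructor <;> by_contra! hlt
  · nlinarith [mul_lt_mul_of_pos_right hlt (hbv.trans_le h₂), mul_le_mul_of_nonneg_left h₂ hau.le]
  · nlinarith [mul_lt_mul_of_pos_right hlt (hau.trans_le h₁), mul_le_mul_of_nonneg_left h₁ hbv.le]

namespace Matrix

variable {ι : Type*} {A : Matrix ι ι ℝ}

theorem nonneg_of_offDiag_pos (hdiag : ∀ i, A i i = 0) (hoff : ∀ i j, i ≠ j → 0 < A i j)
    (i j : ι) : 0 ≤ A i j := by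
  rcases eq_or_ne i j with rfl | hij
  · exact (hdiag i).ge
  · exact (hoff i j hij).le

theorem mul_mul_le_of_le_offDiag (h0 : ∀ i j, 0 ≤ A i j) (hdiag : ∀ i, A i i = 0)
    {d y : ι → ℝ} (hd : ∀ j, 0 ≤ d j) {i : ι} {z : ℝ} (hz : ∀ j ≠ i, y j ≤ z) (j : ι) :
    A i j * (d * y) j ≤ A i j * d j * z := by
  rcases eq_or_ne j i with rfl | hji
  · simp [hdiag]
  · rw [Pi.mul_apply, ← mul_assoc]
    exact mul_le_mul_of_nonneg_left (hz j hji) (mul_nonneg (h0 i j) (hd j))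

variable [Fintype ι]

/-- For the resistance matrix this is the average resistance degree `R̄ᵢ = Tᵢ / Rᵢ`. -/
noncomputable def avgRowSum (A : Matrix ι ι ℝ) (i : ι) : ℝ := (A *ᵥ (A *ᵥ 1)) i / (A *ᵥ 1) i

theorem abs_mulVec_le (h0 : ∀ i j, 0 ≤ A i j) (u : ι → ℝ) : |A *ᵥ u| ≤ A *ᵥ |u| := fun i =>
  (Finset.abs_sum_le_sum_abs _ _).trans_eq <| Finset.sum_congr rfl fun j _ => by
    rw [abs_mul, abs_of_nonneg (h0 i j), Pi.abs_apply]

theorem mulVec_nonneg (h0 : ∀ i j, 0 ≤ A i j) {d : ι → ℝ} (hd : ∀ j, 0 ≤ d j) (i : ι) :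
    0 ≤ (A *ᵥ d) i :=
  Finset.sum_nonneg fun j _ => mul_nonneg (h0 i j) (hd j)

theorem mulVec_pos (h0 : ∀ i j, 0 ≤ A i j) {d : ι → ℝ} (hd : ∀ j, 0 < d j) {i j : ι}
    (hij : 0 < A i j) : 0 < (A *ᵥ d) i :=
  Finset.sum_pos' (fun k _ => mul_nonneg (h0 i k) (hd k).le)
    ⟨j, Finset.mem_univ j, mul_pos hij (hd j)⟩

theorem mulVec_mul_le_of_le_offDiag (h0 : ∀ i j, 0 ≤ A i j) (hdiag : ∀ i, A i i = 0) {d y : ι → ℝ}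
    (hd : ∀ j, 0 ≤ d j) {i : ι} {z : ℝ} (hz : ∀ j ≠ i, y j ≤ z) :
    (A *ᵥ (d * y)) i ≤ (A *ᵥ d) i * z := by
  simp only [mulVec, dotProduct, Finset.sum_mul]
  exact Finset.sum_le_sum fun j _ => mul_mul_le_of_le_offDiag h0 hdiag hd hz j

theorem eq_of_mul_le_mulVec_mul (hdiag : ∀ i, A i i = 0) (hoff : ∀ i j, i ≠ j → 0 < A i j)
    {d y : ι → ℝ} (hd : ∀ j, 0 < d j) {i : ι} {z : ℝ} (hz : ∀ j ≠ i, y j ≤ z)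
    (h : (A *ᵥ d) i * z ≤ (A *ᵥ (d * y)) i) (j : ι) (hji : j ≠ i) : y j = z := by
  have h0 := nonneg_of_offDiag_pos hdiag hoff
  have hterm := mul_mul_le_of_le_offDiag h0 hdiag (fun j => (hd j).le) hz
  have hsum : (A *ᵥ (d * y)) i = (A *ᵥ d) i * z :=
    le_antisymm (mulVec_mul_le_of_le_offDiag h0 hdiag (fun j => (hd j).le) hz) h
  simp only [mulVec, dotProduct, Finset.sum_mul] at hsum
  have hj := (Finset.sum_eq_sum_iff_of_le fun j _ => hterm j).mp hsum j (mem_univ j)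
  rw [Pi.mul_apply, ← mul_assoc] at hj
  exact mul_left_cancel₀ (mul_pos (hoff i j hji.symm) (hd j)).ne' hj

theorem mulVec_bounds_of_two_largest (h0 : ∀ i j, 0 ≤ A i j) (hdiag : ∀ i, A i i = 0)
    {d y : ι → ℝ} (hd : ∀ j, 0 < d j) {ρ : ℝ} (hρ : 0 < ρ) (hy : ρ • (d * y) ≤ A *ᵥ (d * y))
    {p q : ι} (hp : ∀ j, y j ≤ y p) (hq : ∀ j ≠ p, y j ≤ y q) (hyp : 0 < y p) :
    0 < y q ∧ ρ * (d p * y p) ≤ (A *ᵥ d) p * y q ∧ ρ * (d q * y q) ≤ (A *ᵥ d) q * y p := by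
  have hP : ρ * (d p * y p) ≤ (A *ᵥ d) p * y q :=
    (hy p).trans (mulVec_mul_le_of_le_offDiag h0 hdiag (fun j => (hd j).le) hq)
  have hQ : ρ * (d q * y q) ≤ (A *ᵥ d) q * y p :=
    (hy q).trans (mulVec_mul_le_of_le_offDiag h0 hdiag (fun j => (hd j).le) fun j _ => hp j)
  refine ⟨?_, hP, hQ⟩
  by_contra! hyq
  nlinarith [mul_pos hρ (mul_pos (hd p) hyp),
    mul_nonpos_of_nonneg_of_nonpos (mulVec_nonneg h0 (fun j => (hd j).le) p) hyq]

theorem exists_sq_le_mul_of_smul_le_mulVec (h0 : ∀ i j, 0 ≤ A i j) (hdiag : ∀ i, A i i = 0)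
    {d y : ι → ℝ} (hd : ∀ j, 0 < d j) {ρ : ℝ} (hρ : 0 < ρ) (hy : ρ • (d * y) ≤ A *ᵥ (d * y))
    (hy0 : 0 ≤ y) (hy1 : y ≠ 0) (hcard : 1 < Fintype.card ι) :
    ∃ p q, p ≠ q ∧ ρ ^ 2 ≤ (A *ᵥ d) p / d p * ((A *ᵥ d) q / d q) := by
  obtain ⟨p, q, hpq, hp, hq⟩ := Fintype.exists_two_largest y hcard
  obtain ⟨i, hi⟩ := Function.ne_iff.mp hy1
  have hyp : 0 < y p := ((hy0 i).lt_of_ne (Ne.symm hi)).trans_le (hp i)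
  obtain ⟨hyq, hP, hQ⟩ := mulVec_bounds_of_two_largest h0 hdiag hd hρ hy hp hq hyp
  exact ⟨p, q, hpq, sq_le_div_mul_div hρ.le (hd p) (hd q) hyp hyq hP hQ⟩

/-- Tightness of the product of the two row bounds makes both tight, so `y` is constant off `p`
and off `q`; a third index glues the two. -/
theorem exists_eq_const_of_div_mul_div_le_sq (hdiag : ∀ i, A i i = 0)
    (hoff : ∀ i j, i ≠ j → 0 < A i j) {d y : ι → ℝ} (hd : ∀ j, 0 < d j) {ρ : ℝ} (hρ : 0 < ρ)
    (hy : ρ • (d * y) ≤ A *ᵥ (d * y)) (hy0 : 0 ≤ y) (hy1 : y ≠ 0) (hcard : 2 < Fintype.card ι)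
    (hle : ∀ i j, i ≠ j → (A *ᵥ d) i / d i * ((A *ᵥ d) j / d j) ≤ ρ ^ 2) :
    ∃ c, 0 < c ∧ ∀ i, y i = c := by
  classical
  have h0 := nonneg_of_offDiag_pos hdiag hoff
  obtain ⟨p, q, hpq, hp, hq⟩ := Fintype.exists_two_largest y (by omega)
  obtain ⟨i, hi⟩ := Function.ne_iff.mp hy1
  have hyp : 0 < y p := ((hy0 i).lt_of_ne (Ne.symm hi)).trans_le (hp i)
  obtain ⟨hyq, hP, hQ⟩ := mulVec_bounds_of_two_largest h0 hdiag hd hρ hy hp hq hyp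
  obtain ⟨hP', hQ'⟩ :=
    le_of_div_mul_div_le_sq hρ (hd p) (hd q) hyp hyq hP hQ (hle p q hpq)
  have hyq_eq := eq_of_mul_le_mulVec_mul hdiag hoff hd hq (hP'.trans (hy p))
  have hyp_eq := eq_of_mul_le_mulVec_mul hdiag hoff hd (fun j _ => hp j) (hQ'.trans (hy q))
  obtain ⟨k, -, hk⟩ := Finset.exists_mem_notMem_of_card_lt_card (s := {p, q}) (t := univ)
    ((card_le_two).trans_lt (by rwa [card_univ]))
  simp only [mem_insert, mem_singleton, not_or] at hk
  refine ⟨y p, hyp, fun j => ?_⟩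
  rcases eq_or_ne j q with rfl | hjq
  · rw [← hyq_eq k hk.1, hyp_eq k hk.2]
  · exact hyp_eq j hjq

theorem div_eq_of_div_mul_div_le_sq (hdiag : ∀ i, A i i = 0)
    (hoff : ∀ i j, i ≠ j → 0 < A i j) {d y : ι → ℝ} (hd : ∀ j, 0 < d j) {ρ : ℝ} (hρ : 0 < ρ)
    (hy : ρ • (d * y) ≤ A *ᵥ (d * y)) (hy0 : 0 ≤ y) (hy1 : y ≠ 0) (hcard : 2 < Fintype.card ι)
    (hle : ∀ i j, i ≠ j → (A *ᵥ d) i / d i * ((A *ᵥ d) j / d j) ≤ ρ ^ 2) (i : ι) :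
    (A *ᵥ d) i / d i = ρ := by
  obtain ⟨c, hc, hyc⟩ :=
    exists_eq_const_of_div_mul_div_le_sq hdiag hoff hd hρ hy hy0 hy1 hcard hle
  have hge : ∀ i, ρ ≤ (A *ᵥ d) i / d i := fun i => by
    have h := (hy i).trans (mulVec_mul_le_of_le_offDiag (nonneg_of_offDiag_pos hdiag hoff) hdiag
      (fun j => (hd j).le) fun j _ => (hyc j).le)
    change ρ * (d i * y i) ≤ _ at h
    rw [hyc i, ← mul_assoc] at h
    exact (le_div_iff₀ (hd i)).mpr (le_of_mul_le_mul_right h hc)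
  obtain ⟨j, hji⟩ := Fintype.exists_ne_of_one_lt_card (by omega) i
  nlinarith [hle i j hji.symm, hge i, hge j]

variable [DecidableEq ι]

theorem IsHermitian.dotProduct_mulVec_le (hA : A.IsHermitian) {ρ : ℝ}
    (hρ : ∀ i, hA.eigenvalues i ≤ ρ) (x : ι → ℝ) : x ⬝ᵥ (A *ᵥ x) ≤ ρ * (x ⬝ᵥ x) := by
  set U : Matrix ι ι ℝ := (hA.eigenvectorUnitary : Matrix ι ι ℝ) with hU
  have hUU : U * star U = 1 := Matrix.mem_unitaryGroup_iff.mp hA.eigenvectorUnitary.2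
  have hstar : star U = Uᵀ := by
    rw [Matrix.star_eq_conjTranspose, Matrix.conjTranspose_eq_transpose_of_trivial]
  set y : ι → ℝ := Uᵀ *ᵥ x with hy
  have hxy : x ⬝ᵥ x = y ⬝ᵥ y := by
    rw [hy, mulVec_transpose, dotProduct_comm (x ᵥ* U), ← dotProduct_mulVec,
      ← mulVec_transpose, mulVec_mulVec, ← hstar, hUU, one_mulVec]
  have hAx : x ⬝ᵥ (A *ᵥ x) = ∑ i, hA.eigenvalues i * (y i * y i) := by
    conv_lhs => rw [hA.spectral_theorem, Unitary.conjStarAlgAut_apply, ← hU]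
    rw [hstar, ← mulVec_mulVec, ← mulVec_mulVec, dotProduct_mulVec, ← mulVec_transpose, ← hy]
    simp [Matrix.mulVec_diagonal, dotProduct, mul_left_comm]
  rw [hAx, hxy, dotProduct, Finset.mul_sum]
  exact Finset.sum_le_sum fun i _ => mul_le_mul_of_nonneg_right (hρ i) (mul_self_nonneg _)

theorem IsHermitian.pos_of_dotProduct_mulVec_pos (hA : A.IsHermitian) {ρ : ℝ}
    (hρ : ∀ i, hA.eigenvalues i ≤ ρ) {x : ι → ℝ} (hx : 0 < x ⬝ᵥ (A *ᵥ x)) : 0 < ρ :=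
  pos_of_mul_pos_left (hx.trans_le (hA.dotProduct_mulVec_le hρ x))
    (Finset.sum_nonneg fun i _ => mul_self_nonneg (x i))

theorem IsHermitian.le_of_mulVec_eq_smul (hA : A.IsHermitian) {ρ : ℝ}
    (hρ : ∀ i, hA.eigenvalues i ≤ ρ) {c : ℝ} {x : ι → ℝ} (hx : x ≠ 0)
    (hAx : A *ᵥ x = c • x) : c ≤ ρ := by
  have h := hA.dotProduct_mulVec_le hρ x
  rw [hAx, dotProduct_smul, smul_eq_mul] at h
  have hxx : 0 < x ⬝ᵥ x := by
    simpa only [star_trivial] using dotProduct_self_star_pos_iff.mpr hx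
  exact le_of_mul_le_mul_right h hxx

theorem IsHermitian.exists_nonneg_smul_le_mulVec (hA : A.IsHermitian) (h0 : ∀ i j, 0 ≤ A i j)
    (k : ι) : ∃ w : ι → ℝ, 0 ≤ w ∧ w ≠ 0 ∧ hA.eigenvalues k • w ≤ A *ᵥ w := by
  set u : ι → ℝ := ⇑(hA.eigenvectorBasis k)
  have hu : u ≠ 0 := fun h =>
    hA.eigenvectorBasis.orthonormal.ne_zero k (by simpa [u] using h)
  refine ⟨|u|, abs_nonneg u, by simpa using hu, fun i => ?_⟩
  calc hA.eigenvalues k * |u i| ≤ |hA.eigenvalues k * u i| := by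
        rw [abs_mul]; exact mul_le_mul_of_nonneg_right (le_abs_self _) (abs_nonneg _)
    _ = |A *ᵥ u| i := by rw [hA.mulVec_eigenvectorBasis k]; rfl
    _ ≤ (A *ᵥ |u|) i := abs_mulVec_le h0 u i

theorem IsHermitian.dotProduct_mulVec_single_sub_single {X : Matrix ι ι ℝ}
    (hX : X.IsHermitian) (i j : ι) :
    (Pi.single i 1 - Pi.single j 1) ⬝ᵥ (X *ᵥ (Pi.single i 1 - Pi.single j 1)) =
      X i i + X j j - 2 * X i j := by
  have hji : X j i = X i j := by simpa using hX.apply i j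
  simp only [mulVec_sub, mulVec_single_one, sub_dotProduct, dotProduct_sub, single_dotProduct,
    col_apply, one_mul, hji]
  ring

theorem IsHermitian.exists_smul_mul_le_mulVec_mul (hA : A.IsHermitian)
    (h0 : ∀ i j, 0 ≤ A i j) {d : ι → ℝ} (hd : ∀ i, 0 < d i) (k : ι) :
    ∃ y : ι → ℝ, 0 ≤ y ∧ y ≠ 0 ∧ hA.eigenvalues k • (d * y) ≤ A *ᵥ (d * y) := by
  obtain ⟨w, hw0, hw1, hw⟩ := hA.exists_nonneg_smul_le_mulVec h0 k
  have hdw : d * (w / d) = w := funext fun i => mul_div_cancel₀ _ (hd i).ne'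
  exact ⟨w / d, fun i => div_nonneg (hw0 i) (hd i).le,
    fun h => hw1 (by rw [← hdw, h, mul_zero]), by rwa [hdw]⟩

theorem IsHermitian.avgRowSum_le_of_forall_eq (hA : A.IsHermitian) {ρ : ℝ}
    (hρ : ∀ i, hA.eigenvalues i ≤ ρ) (hd : ∀ i, 0 < (A *ᵥ 1) i)
    (hconst : ∀ i j, A.avgRowSum i = A.avgRowSum j) (i : ι) : A.avgRowSum i ≤ ρ := by
  refine hA.le_of_mulVec_eq_smul hρ (x := A *ᵥ 1) (fun h => (hd i).ne' (by rw [h]; rfl)) ?_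
  funext l
  rw [Pi.smul_apply, smul_eq_mul, hconst i l, avgRowSum, div_mul_cancel₀ _ (hd l).ne']

theorem avgRowSum_eq_of_card_eq_two (hA : A.IsHermitian) (hdiag : ∀ i, A i i = 0)
    (hcard : Fintype.card ι = 2) (i j : ι) : A.avgRowSum i = A.avgRowSum j := by
  rcases eq_or_ne i j with rfl | hij
  · rfl
  have hmulVec : ∀ {i j : ι}, i ≠ j → ∀ v, (A *ᵥ v) i = A i j * v j := fun {i j} hij v => by
    have huniv : ({i, j} : Finset ι) = univ := eq_univ_of_card _ (by rw [card_pair hij, hcard])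
    rw [mulVec, dotProduct, ← huniv, sum_pair hij, hdiag, zero_mul, zero_add]
  have hji : A j i = A i j := by simpa using hA.apply i j
  simp only [avgRowSum, hmulVec hij, hmulVec hij.symm, hji, Pi.one_apply]

theorem IsHermitian.le_sqrt_avgRowSum_and_eq_iff (hA : A.IsHermitian) (hdiag : ∀ i, A i i = 0)
    (hoff : ∀ i j, i ≠ j → 0 < A i j) (hcard : 2 ≤ Fintype.card ι) {ρ m : ℝ}
    (hρ : IsGreatest (Set.range hA.eigenvalues) ρ)
    (hm : IsGreatest {x | ∃ i j, i ≠ j ∧ x = √(A.avgRowSum i * A.avgRowSum j)} m) :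
    ρ ≤ m ∧ (ρ = m ↔ ∀ i j, A.avgRowSum i = A.avgRowSum j) := by
  obtain ⟨⟨k, rfl⟩, hρmax⟩ := hρ
  have hle : ∀ i, hA.eigenvalues i ≤ hA.eigenvalues k := fun i => hρmax ⟨i, rfl⟩
  have h0 := nonneg_of_offDiag_pos hdiag hoff
  have hd : ∀ i, 0 < (A *ᵥ 1) i := fun i => by
    obtain ⟨j, hji⟩ := Fintype.exists_ne_of_one_lt_card hcard i
    exact mulVec_pos h0 (fun _ => one_pos) (hoff i j hji.symm)
  have hρ : 0 < hA.eigenvalues k := hA.pos_of_dotProduct_mulVec_pos hle (x := 1) <| by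
    have : Nonempty ι := Fintype.card_pos_iff.mp (by omega)
    rw [one_dotProduct]
    exact sum_pos (fun i _ => hd i) univ_nonempty
  obtain ⟨y, hy0, hy1, hy⟩ := hA.exists_smul_mul_le_mulVec_mul h0 hd k
  have hρm : hA.eigenvalues k ≤ m := by
    obtain ⟨p, q, hpq, h⟩ :=
      exists_sq_le_mul_of_smul_le_mulVec h0 hdiag hd hρ hy hy0 hy1 hcard
    exact (le_abs_self _).trans ((Real.abs_le_sqrt h).trans (hm.2 ⟨p, q, hpq, rfl⟩))
  refine ⟨hρm, fun heq => ?_, fun hconst => le_antisymm hρm ?_⟩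
  · rcases hcard.eq_or_lt with h2 | h3
    · exact avgRowSum_eq_of_card_eq_two hA hdiag h2.symm
    have hsq : ∀ i j, i ≠ j → A.avgRowSum i * A.avgRowSum j ≤ hA.eigenvalues k ^ 2 :=
      fun i j hij => (Real.sqrt_le_left hρ.le).mp (heq ▸ hm.2 ⟨i, j, hij, rfl⟩)
    have h := div_eq_of_div_mul_div_le_sq hdiag hoff hd hρ hy hy0 hy1 h3 hsq
    exact fun i j => (h i).trans (h j).symm
  · obtain ⟨i, j, -, rfl⟩ := hm.1
    have hb : 0 ≤ A.avgRowSum i := div_nonneg (mulVec_nonneg h0 (fun l => (hd l).le) i) (hd i).le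
    rw [hconst j i, Real.sqrt_mul_self hb]
    exact hA.avgRowSum_le_of_forall_eq hle hd hconst i

end Matrix

section Resistance

variable {V : Type*} [Fintype V]

theorem dotProduct_allOnes_mulVec (x : V → ℝ) : x ⬝ᵥ (allOnes V *ᵥ x) = (∑ i, x i) ^ 2 := by
  simp [allOnes, mulVec, dotProduct, sq, Finset.sum_mul]

variable [DecidableEq V] (G : SimpleGraph V) [DecidableRel G.Adj]

theorem posDef_lapMatrix_add_smul_allOnes (hG : G.Connected) :
    (G.lapMatrix ℝ + (Fintype.card V : ℝ)⁻¹ • allOnes V).PosDef := by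
  have hJ : (allOnes V).IsHermitian := by ext i j; simp [allOnes]
  refine .of_dotProduct_mulVec_pos ((G.posSemidef_lapMatrix ℝ).1.add (hJ.smul (.all _)))
    fun x hx => ?_
  rw [star_trivial, add_mulVec, dotProduct_add, smul_mulVec, dotProduct_smul,
    dotProduct_allOnes_mulVec, smul_eq_mul]
  have hL : 0 ≤ x ⬝ᵥ (G.lapMatrix ℝ *ᵥ x) := by
    simpa using (G.posSemidef_lapMatrix ℝ).dotProduct_mulVec_nonneg x
  rcases hL.lt_or_eq with hL | hL
  · positivity
  have hconst : ∀ i j, x i = x j := fun i j =>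
    (G.lapMatrix_toLinearMap₂'_apply'_eq_zero_iff_forall_reachable x).mp
      (by rw [toLinearMap₂'_apply']; exact hL.symm) i j (hG.preconnected i j)
  obtain ⟨i, hi⟩ := Function.ne_iff.mp hx
  have hsum : ∑ j, x j = Fintype.card V * x i := by simp [hconst _ i]
  have hcard : (0 : ℝ) < Fintype.card V := by
    have : Nonempty V := hG.nonempty
    exact_mod_cast Fintype.card_pos
  rw [← hL, zero_add, hsum]
  exact mul_pos (inv_pos.mpr hcard) (pow_two_pos_of_ne_zero (mul_ne_zero hcard.ne' hi))

theorem resistMatrix_apply_self (i : V) : resistMatrix G i i = 0 := by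
  rw [resistMatrix, of_apply]; ring

theorem resistMatrix_apply_pos (hG : G.Connected) {i j : V} (hij : i ≠ j) :
    0 < resistMatrix G i j := by
  have hX := (posDef_lapMatrix_add_smul_allOnes G hG).inv
  have hv : Pi.single i 1 - Pi.single j 1 ≠ (0 : V → ℝ) := fun h => by
    simpa [hij] using congrFun h i
  simpa [hX.1.dotProduct_mulVec_single_sub_single, resistMatrix] using
    hX.dotProduct_mulVec_pos hv

theorem rdeg2_div_rdeg (i : V) : rdeg2 G i / rdeg G i = (resistMatrix G).avgRowSum i := by
  have hrdeg : rdeg G = resistMatrix G *ᵥ 1 := funext fun i => by simp [rdeg, mulVec, dotProduct]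
  rw [Matrix.avgRowSum, ← hrdeg]
  rfl

end Resistance

theorem resistance_spectral_radius_upper_bound_avg
    (n : ℕ) (hn : 2 ≤ n) (G : SimpleGraph (Fin n)) [DecidableRel G.Adj]
    (hG : G.Connected) (hR : (resistMatrix G).IsHermitian)
    (ρ : ℝ) (hρ : IsGreatest (Set.range hR.eigenvalues) ρ)
    (m : ℝ) (hm : IsGreatest
      {x : ℝ | ∃ i j : Fin n, i ≠ j ∧
        x = Real.sqrt ((rdeg2 G i / rdeg G i) * (rdeg2 G j / rdeg G j))} m) :
    ρ ≤ m ∧ (ρ = m ↔ ∀ i j : Fin n, rdeg2 G i / rdeg G i = rdeg2 G j / rdeg G j) := by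
  simp only [rdeg2_div_rdeg] at hm ⊢
  exact hR.le_sqrt_avgRowSum_and_eq_iff (resistMatrix_apply_self G)
    (fun i j hij => resistMatrix_apply_pos G hG hij) (by simpa using hn) hρ hm
end

section
/- The resistance distance matrix of the prism K_n × K_2 has spectrum: (5n² + 2n − 4)/(n(n+2)) with multiplicity 1, −2/n with multiplicity n−1, −1 with multiplicity 1, and −2/(n+2) with multiplicity n−1; consequently E_R(K_n × K_2) = (10n² + 4n − 8)/(n(n+2)) and K_n × K_2 is (5n² + 2n − 4)/(n(n+2))-resistance regular. -/
open Matrix BigOperators Finset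

/-- The prism `Kₙ × K₂` (Cartesian product of the complete graph `Kₙ` with `K₂`). -/
def prism (n : ℕ) : SimpleGraph (Fin n × Fin 2) where
  Adj v w := (v.1 = w.1 ∧ v.2 ≠ w.2) ∨ (v.1 ≠ w.1 ∧ v.2 = w.2)
  symm := ⟨fun _ _ h => h.imp (fun h' => ⟨h'.1.symm, h'.2.symm⟩)
    (fun h' => ⟨h'.1.symm, h'.2.symm⟩)⟩
  loopless := ⟨fun v h => h.elim (fun h' => h'.2 rfl) (fun h' => h'.1 rfl)⟩

instance (n : ℕ) : DecidableRel (prism n).Adj := fun v w =>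
  inferInstanceAs (Decidable ((v.1 = w.1 ∧ v.2 ≠ w.2) ∨ (v.1 ≠ w.1 ∧ v.2 = w.2)))

/-!
Every matrix in sight has the shape `(a I + b J) ⊗ I₂ + (c I + d J) ⊗ σ`, where `J` is the
all-ones matrix and `σ` swaps the two layers. These matrices are simultaneously diagonalised by
`V ⊗ H`, where the columns of `V` are the all-ones vector and the vectors `e_j - e_0` and `H` is
the `2 × 2` Hadamard matrix; the eigenvalues are `a + n b ± (c + n d)` once each and `a ± c` with
multiplicity `n - 1` each. The regularised Laplacian `L + J/(2n)` of the prism has this shape with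
eigenvalues `1, 2, n, n + 2`, so its inverse `X` has it too; the diagonal of `X` is constant, so the
resistance matrix `X_ii + X_jj - 2 X_ij` has it as well, and its row sums are its eigenvalue on the
all-ones vector.
-/

open Kronecker

section AllOnes

variable {n : ℕ} [NeZero n]

variable (n) in
def allOnesEigvecs : Matrix (Fin n) (Fin n) ℝ :=
  Matrix.of fun i j => if j = 0 then 1 else (if i = j then 1 else 0) - (if i = 0 then 1 else 0)

variable (n) in
noncomputable def allOnesEigvecsInv : Matrix (Fin n) (Fin n) ℝ :=
  Matrix.of fun i j => if i = 0 then (n : ℝ)⁻¹ else (if i = j then 1 else 0) - (n : ℝ)⁻¹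

lemma allOnesEigvecsInv_mul_allOnesEigvecs :
    allOnesEigvecsInv n * allOnesEigvecs n = 1 := by
  have hn : (n : ℝ) ≠ 0 := NeZero.ne _
  ext i j
  by_cases hj : j = 0 <;> by_cases hi : i = 0 <;>
    simp [allOnesEigvecsInv, allOnesEigvecs, Matrix.mul_apply, Matrix.one_apply, hi, hj, mul_sub,
      Finset.sum_sub_distrib, hn, eq_comm (a := (0 : Fin n))]

lemma allOnes_mul_allOnesEigvecs :
    allOnes (Fin n) * allOnesEigvecs n =
      allOnesEigvecs n * diagonal fun j => if j = 0 then (n : ℝ) else 0 := by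
  ext i j
  rw [Matrix.mul_diagonal]
  by_cases hj : j = 0 <;>
    simp [allOnes, allOnesEigvecs, Matrix.mul_apply, hj, Finset.sum_sub_distrib]

end AllOnes

section Prism

variable {n : ℕ}

def swapMatrix : Matrix (Fin 2) (Fin 2) ℝ := !![0, 1; 1, 0]

def hadamard2 : Matrix (Fin 2) (Fin 2) ℝ := !![1, 1; 1, -1]

lemma swapMatrix_mul_hadamard2 : swapMatrix * hadamard2 = hadamard2 * diagonal ![1, -1] := by
  ext i j; fin_cases i <;> fin_cases j <;> simp [swapMatrix, hadamard2]

lemma hadamard2_mul_hadamard2 : hadamard2 * ((2 : ℝ)⁻¹ • hadamard2) = 1 := by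
  ext i j; fin_cases i <;> fin_cases j <;> norm_num [hadamard2]

variable (n) in
noncomputable def prismMatrix (a b c d : ℝ) : Matrix (Fin n × Fin 2) (Fin n × Fin 2) ℝ :=
  (a • 1 + b • allOnes (Fin n)) ⊗ₖ 1 + (c • 1 + d • allOnes (Fin n)) ⊗ₖ swapMatrix

lemma prismMatrix_apply (a b c d : ℝ) (v w : Fin n × Fin 2) :
    prismMatrix n a b c d v w =
      if v.2 = w.2 then (if v.1 = w.1 then a else 0) + b else (if v.1 = w.1 then c else 0) + d := by
  obtain ⟨i, s⟩ := v
  obtain ⟨j, t⟩ := w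
  fin_cases s <;> fin_cases t <;> simp [prismMatrix, swapMatrix, allOnes, Matrix.one_apply]

lemma sum_prismMatrix_apply (a b c d : ℝ) (v : Fin n × Fin 2) :
    ∑ w, prismMatrix n a b c d v w = a + n * b + (c + n * d) := by
  obtain ⟨i, s⟩ := v
  rw [Fintype.sum_prod_type]
  fin_cases s <;> simp [prismMatrix_apply, Fin.sum_univ_two, Finset.sum_add_distrib]
  all_goals ring

end Prism

section PrismSpectrum

variable {n : ℕ} [NeZero n]

lemma smul_one_add_smul_allOnes_mul_allOnesEigvecs (a b : ℝ) :
    (a • 1 + b • allOnes (Fin n)) * allOnesEigvecs n =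
      allOnesEigvecs n * diagonal fun j => a + b * if j = 0 then (n : ℝ) else 0 := by
  rw [add_mul, smul_mul, smul_mul, allOnes_mul_allOnesEigvecs, one_mul]
  ext i j
  by_cases hj : j = 0 <;> simp [mul_diagonal, hj, mul_comm]
  ring

variable (n) in
def prismEigvecs : Matrix (Fin n × Fin 2) (Fin n × Fin 2) ℝ :=
  allOnesEigvecs n ⊗ₖ hadamard2

variable (n) in
noncomputable def prismEigvecsInv : Matrix (Fin n × Fin 2) (Fin n × Fin 2) ℝ :=
  allOnesEigvecsInv n ⊗ₖ ((2 : ℝ)⁻¹ • hadamard2)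

lemma prismEigvecs_mul_prismEigvecsInv : prismEigvecs n * prismEigvecsInv n = 1 := by
  rw [prismEigvecs, prismEigvecsInv, ← mul_kronecker_mul,
    mul_eq_one_comm.mp allOnesEigvecsInv_mul_allOnesEigvecs, hadamard2_mul_hadamard2,
    one_kronecker_one]

variable (n) in
noncomputable def prismEigenvalues (a b c d : ℝ) (v : Fin n × Fin 2) : ℝ :=
  a + b * (if v.1 = 0 then (n : ℝ) else 0) +
    ![1, -1] v.2 * (c + d * if v.1 = 0 then (n : ℝ) else 0)

lemma prismMatrix_mul_prismEigvecs (a b c d : ℝ) :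
    prismMatrix n a b c d * prismEigvecs n =
      prismEigvecs n * diagonal (prismEigenvalues n a b c d) := by
  rw [prismMatrix, prismEigvecs, add_mul, ← mul_kronecker_mul, ← mul_kronecker_mul,
    smul_one_add_smul_allOnes_mul_allOnesEigvecs, smul_one_add_smul_allOnes_mul_allOnesEigvecs,
    swapMatrix_mul_hadamard2, one_mul, ← mul_one hadamard2, mul_kronecker_mul, mul_kronecker_mul,
    mul_one, ← mul_add,
    ← diagonal_one, diagonal_kronecker_diagonal, diagonal_kronecker_diagonal, diagonal_add]
  congr 2
  funext v
  simp [prismEigenvalues, mul_comm]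

lemma prismMatrix_eq_conj (a b c d : ℝ) :
    prismMatrix n a b c d =
      prismEigvecs n * diagonal (prismEigenvalues n a b c d) * prismEigvecsInv n := by
  rw [← prismMatrix_mul_prismEigvecs, mul_assoc, prismEigvecs_mul_prismEigvecsInv, mul_one]

lemma roots_charpoly_prismMatrix (a b c d : ℝ) :
    (prismMatrix n a b c d).charpoly.roots =
      Finset.univ.val.map (prismEigenvalues n a b c d) := by
  rw [prismMatrix_eq_conj, charpoly_mul_comm, ← mul_assoc,
    mul_eq_one_comm.mp prismEigvecs_mul_prismEigvecsInv, one_mul, charpoly_diagonal,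
    Polynomial.roots_prod _ _ (Finset.prod_ne_zero_iff.mpr fun _ _ => Polynomial.X_sub_C_ne_zero _)]
  simp

lemma prismMatrix_mul_eq_one {a b c d a' b' c' d' : ℝ}
    (h : ∀ v, prismEigenvalues n a b c d v * prismEigenvalues n a' b' c' d' v = 1) :
    prismMatrix n a b c d * prismMatrix n a' b' c' d' = 1 := by
  have hPinvP := mul_eq_one_comm.mp (prismEigvecs_mul_prismEigvecsInv (n := n))
  rw [prismMatrix_eq_conj, prismMatrix_eq_conj]
  simp only [mul_assoc]
  rw [← mul_assoc (prismEigvecsInv n), hPinvP, one_mul, ← mul_assoc (diagonal _),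
    diagonal_mul_diagonal, funext h, diagonal_one, one_mul, prismEigvecs_mul_prismEigvecsInv]

lemma univ_val_map_prismEigenvalues (a b c d : ℝ) :
    Finset.univ.val.map (prismEigenvalues n a b c d) =
      (a + n * b + (c + n * d)) ::ₘ
        (Multiset.replicate (n - 1) (a + c) +
          (a + n * b - (c + n * d)) ::ₘ Multiset.replicate (n - 1) (a - c)) := by
  obtain ⟨m, rfl⟩ : ∃ m, n = m + 1 := Nat.exists_eq_add_one_of_ne_zero (NeZero.ne n)
  rw [← Multiset.sum_map_singleton (Multiset.map _ _), Multiset.map_map,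
    ← Finset.sum_eq_multiset_sum, Fintype.sum_prod_type]
  simp only [Fin.sum_univ_two, Function.comp_apply]
  rw [Fin.sum_univ_succ, Finset.sum_add_distrib]
  simp only [prismEigenvalues, Fin.succ_ne_zero, if_true, if_false, Matrix.cons_val_zero,
    Matrix.cons_val_one, Finset.sum_const, Finset.card_univ, Fintype.card_fin,
    Multiset.nsmul_singleton, Nat.add_sub_cancel, Nat.cast_add_one, Multiset.singleton_add,
    Multiset.cons_add, Multiset.add_cons, mul_zero, add_zero, one_mul, neg_one_mul,
    ← sub_eq_add_neg]
  congr 2 <;> ring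

end PrismSpectrum

section PrismGraph

lemma prism_adjMatrix (n : ℕ) : (prism n).adjMatrix ℝ = prismMatrix n (-1) 1 1 0 := by
  ext ⟨i, s⟩ ⟨j, t⟩
  rw [SimpleGraph.adjMatrix_apply]
  by_cases hij : i = j <;> by_cases hst : s = t <;> simp [prism, prismMatrix_apply, hij, hst]

lemma prism_degree (n : ℕ) (v : Fin n × Fin 2) : (prism n).degree v = n := by
  have h := SimpleGraph.adjMatrix_mulVec_const_apply (G := prism n) (a := (1 : ℝ)) (v := v)
  rw [prism_adjMatrix, mulVec, dotProduct] at h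
  simp only [Function.const_apply, mul_one, sum_prismMatrix_apply] at h
  exact_mod_cast (by linarith : ((prism n).degree v : ℝ) = n)

lemma lapMatrix_add_prism (n : ℕ) :
    (prism n).lapMatrix ℝ +
        (Fintype.card (Fin n × Fin 2) : ℝ)⁻¹ • allOnes (Fin n × Fin 2) =
      prismMatrix n (n + 1) (-1 + (2 * n : ℝ)⁻¹) (-1) (2 * n : ℝ)⁻¹ := by
  ext ⟨i, s⟩ ⟨j, t⟩
  by_cases hij : i = j <;> by_cases hst : s = t <;>
    simp [SimpleGraph.lapMatrix, SimpleGraph.degMatrix, prism_adjMatrix, prism_degree,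
      prismMatrix_apply, allOnes, hij, hst, mul_comm]

end PrismGraph

section PrismResistance

variable {n : ℕ} [NeZero n]

lemma inv_lapMatrix_add_prism :
    ((prism n).lapMatrix ℝ +
        (Fintype.card (Fin n × Fin 2) : ℝ)⁻¹ • allOnes (Fin n × Fin 2))⁻¹ =
      prismMatrix n ((n + 1) / (n * (n + 2))) (3 / (4 * n) - (n + 1) / (n ^ 2 * (n + 2)))
        (1 / (n * (n + 2))) (1 / (4 * n) - 1 / (n ^ 2 * (n + 2))) := by
  have hn : (n : ℝ) ≠ 0 := NeZero.ne _
  have hn2 : (n : ℝ) + 2 ≠ 0 := by positivity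
  refine inv_eq_right_inv ((lapMatrix_add_prism n).symm ▸ prismMatrix_mul_eq_one ?_)
  rintro ⟨i, s⟩
  by_cases hi : i = 0 <;> fin_cases s <;> simp [prismEigenvalues, hi] <;> field_simp <;> ring

lemma resistMatrix_prism :
    resistMatrix (prism n) =
      prismMatrix n (-(2 * (n + 1) / (n * (n + 2)))) (2 * (n + 1) / (n * (n + 2)))
        (-(2 / (n * (n + 2)))) ((3 * n + 2) / (n * (n + 2))) := by
  have hn : (n : ℝ) ≠ 0 := NeZero.ne _
  have hn2 : (n : ℝ) + 2 ≠ 0 := by positivity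
  ext ⟨i, s⟩ ⟨j, t⟩
  rw [resistMatrix, of_apply, inv_lapMatrix_add_prism]
  by_cases hij : i = j <;> by_cases hst : s = t <;> simp [prismMatrix_apply, hij, hst] <;>
    field_simp <;> ring

lemma roots_charpoly_resistMatrix_prism :
    (resistMatrix (prism n)).charpoly.roots =
      ((5 * (n : ℝ) ^ 2 + 2 * n - 4) / (n * (n + 2))) ::ₘ
        (Multiset.replicate (n - 1) (-2 / (n : ℝ)) +
          (-1 : ℝ) ::ₘ Multiset.replicate (n - 1) (-2 / ((n : ℝ) + 2))) := by
  have hn : (n : ℝ) ≠ 0 := NeZero.ne _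
  have hn2 : (n : ℝ) + 2 ≠ 0 := by positivity
  rw [resistMatrix_prism, roots_charpoly_prismMatrix, univ_val_map_prismEigenvalues]
  congr 2 <;> (try congr 2) <;> field_simp <;> ring

lemma sum_resistMatrix_prism_apply (v : Fin n × Fin 2) :
    ∑ w, resistMatrix (prism n) v w = (5 * (n : ℝ) ^ 2 + 2 * n - 4) / (n * (n + 2)) := by
  have hn : (n : ℝ) ≠ 0 := NeZero.ne _
  have hn2 : (n : ℝ) + 2 ≠ 0 := by positivity
  rw [resistMatrix_prism, sum_prismMatrix_apply]
  field_simp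
  ring

end PrismResistance

theorem resistance_spectrum_prism (n : ℕ) (hn : 2 ≤ n)
    (hR : (resistMatrix (prism n)).IsHermitian) :
    Multiset.map hR.eigenvalues Finset.univ.val =
      ((5 * (n : ℝ) ^ 2 + 2 * n - 4) / (n * (n + 2))) ::ₘ
        (Multiset.replicate (n - 1) (-2 / (n : ℝ)) +
          (-1 : ℝ) ::ₘ Multiset.replicate (n - 1) (-2 / ((n : ℝ) + 2))) ∧
    (∑ v, |hR.eigenvalues v|) = (10 * (n : ℝ) ^ 2 + 4 * n - 8) / (n * (n + 2)) ∧
    (∀ v, rdeg (prism n) v = (5 * (n : ℝ) ^ 2 + 2 * n - 4) / (n * (n + 2))) := by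
  have : NeZero n := ⟨by omega⟩
  have hspec : Multiset.map hR.eigenvalues Finset.univ.val =
      (resistMatrix (prism n)).charpoly.roots := by
    simpa using hR.roots_charpoly_eq_eigenvalues.symm
  rw [roots_charpoly_resistMatrix_prism] at hspec
  refine ⟨hspec, ?_, fun v => sum_resistMatrix_prism_apply v⟩
  have hn0 : (0 : ℝ) < n := by positivity
  have hn1 : ((n - 1 : ℕ) : ℝ) = n - 1 := by push_cast [Nat.cast_sub (by omega : 1 ≤ n)]; ring
  calc ∑ v, |hR.eigenvalues v| = ((Finset.univ.val.map hR.eigenvalues).map abs).sum := by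
        rw [Multiset.map_map]; rfl
    _ = _ := by
      have hpos : 0 < 5 * (n : ℝ) ^ 2 + 2 * n - 4 := by nlinarith
      rw [hspec]
      simp [abs_div, abs_of_pos hpos, abs_of_pos hn0,
        abs_of_pos (by positivity : (0 : ℝ) < n + 2), hn1]
      field_simp
      ring
end
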